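/- Let n ≥ 0 and b₀,…,bₙ, λ₀,…,λₙ be positive integers, and let m(n) = λ₀ + ⋯ + λₙ. Then the continuant of the word consisting of b₀ repeated λ₀ times, then b₁ repeated λ₁ times, …, then bₙ repeated λₙ times satisfies ∑_{k=0}^{n} λ_k log b_k ≤ log K_{m(n)}(b₀^{λ₀},…,bₙ^{λₙ}) ≤ 2 ∑_{k=0}^{n} λ_k log(b_k + 1). -/

import Mathlib

open Filter Finset Polynomial

/-!
The continuant is squeezed between the products of its entries: dropping the term `K_{m-2}`
of the recursion gives `∏ aᵢ ≤ K_m`, and `K_{m-2} ≤ K_{m-1}` gives `K_m ≤ ∏ (aᵢ + 1)`.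
For the block word these products are `∏ b_k ^ λ_k` and `∏ (b_k + 1) ^ λ_k`, and taking
logarithms gives the two bounds.
-/

/-- Continuant `K_n(a 1, …, a n)`: `K 0 = 1`, `K 1 = a 1`,
`K (n+2) = a (n+2) * K (n+1) + K n`. -/
def contK (a : ℕ → ℕ) : ℕ → ℕ
  | 0 => 1
  | 1 => a 1
  | (n+2) => a (n+2) * contK a (n+1) + contK a n

theorem prod_Icc_le_contK (a : ℕ → ℕ) : ∀ m, ∏ i ∈ Icc 1 m, a i ≤ contK a m
  | 0 => by simp [contK]
  | 1 => by simp [contK]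
  | m + 2 => by
    rw [prod_Icc_succ_top (by omega), mul_comm]
    calc a (m + 2) * ∏ i ∈ Icc 1 (m + 1), a i
        ≤ a (m + 2) * contK a (m + 1) :=
          Nat.mul_le_mul_left _ (prod_Icc_le_contK a (m + 1))
      _ ≤ contK a (m + 2) := Nat.le_add_right _ _

theorem contK_le_prod_Icc_add_one (a : ℕ → ℕ) :
    ∀ m, contK a m ≤ ∏ i ∈ Icc 1 m, (a i + 1)
  | 0 => by simp [contK]
  | 1 => by simp [contK]
  | m + 2 => by
    set P := ∏ i ∈ Icc 1 (m + 1), (a i + 1)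
    have hP : ∏ i ∈ Icc 1 m, (a i + 1) ≤ P :=
      prod_le_prod_of_subset_of_one_le' (Icc_subset_Icc_right m.le_succ)
        fun i _ _ => Nat.le_add_left 1 (a i)
    rw [prod_Icc_succ_top (by omega) (fun i => a i + 1)]
    calc contK a (m + 2) = a (m + 2) * contK a (m + 1) + contK a m := rfl
      _ ≤ a (m + 2) * P + P :=
        Nat.add_le_add (Nat.mul_le_mul_left _ (contK_le_prod_Icc_add_one a (m + 1)))
          ((contK_le_prod_Icc_add_one a m).trans hP)
      _ = P * (a (m + 2) + 1) := by ring

theorem prod_Ioc_partialSum_eq_prod_pow {M : Type*} [CommMonoid M] (lam : ℕ → ℕ)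
    (g c : ℕ → M)
    (hblock : ∀ j i, (∑ k ∈ range j, lam k) < i → i ≤ ∑ k ∈ range (j + 1), lam k →
      g i = c j) :
    ∀ N, ∏ i ∈ Ioc 0 (∑ k ∈ range N, lam k), g i = ∏ j ∈ range N, c j ^ lam j
  | 0 => by simp
  | N + 1 => by
    have hlast : ∏ i ∈ Ioc (∑ k ∈ range N, lam k) (∑ k ∈ range (N + 1), lam k), g i
        = c N ^ lam N := by
      rw [prod_congr rfl fun i hi => hblock N i (mem_Ioc.1 hi).1 (mem_Ioc.1 hi).2,
        prod_const, Nat.card_Ioc, sum_range_succ, Nat.add_sub_cancel_left]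
    have hmono : ∑ k ∈ range N, lam k ≤ ∑ k ∈ range (N + 1), lam k :=
      sum_le_sum_of_subset (range_subset_range.2 N.le_succ)
    rw [← prod_Ioc_consecutive _ (Nat.zero_le _) hmono,
      prod_Ioc_partialSum_eq_prod_pow lam g c hblock N, hlast, prod_range_succ]

theorem Real.log_natCast_prod_pow {ι : Type*} (s : Finset ι) (c e : ι → ℕ)
    (hc : ∀ i ∈ s, c i ≠ 0) :
    Real.log ((∏ i ∈ s, c i ^ e i : ℕ) : ℝ) =
      ∑ i ∈ s, (e i : ℝ) * Real.log (c i) := by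
  push_cast
  rw [Real.log_prod fun i hi => pow_ne_zero _ (Nat.cast_ne_zero.2 (hc i hi))]
  simp only [Real.log_pow]

theorem continuant_block_log_bounds_general (n : ℕ) (b lam : ℕ → ℕ)
    (hb : ∀ k, 0 < b k) (a : ℕ → ℕ)
    (hblock : ∀ j i, (∑ k ∈ Finset.range j, lam k) < i →
      i ≤ ∑ k ∈ Finset.range (j + 1), lam k → a i = b j) :
    (∑ k ∈ Finset.range (n + 1), (lam k : ℝ) * Real.log (b k)) ≤
        Real.log (contK a (∑ k ∈ Finset.range (n + 1), lam k)) ∧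
      Real.log (contK a (∑ k ∈ Finset.range (n + 1), lam k)) ≤
        2 * ∑ k ∈ Finset.range (n + 1), (lam k : ℝ) * Real.log (b k + 1) := by
  set m := ∑ k ∈ range (n + 1), lam k
  have hlower : ∏ k ∈ range (n + 1), b k ^ lam k ≤ contK a m := by
    rw [← prod_Ioc_partialSum_eq_prod_pow lam a b hblock, ← Icc_add_one_left_eq_Ioc]
    exact prod_Icc_le_contK a m
  have hupper : contK a m ≤ ∏ k ∈ range (n + 1), (b k + 1) ^ lam k := by
    rw [← prod_Ioc_partialSum_eq_prod_pow lam (fun i => a i + 1) (fun k => b k + 1)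
      fun j i h₁ h₂ => by rw [hblock j i h₁ h₂], ← Icc_add_one_left_eq_Ioc]
    exact contK_le_prod_Icc_add_one a m
  have hpos : 0 < ∏ k ∈ range (n + 1), b k ^ lam k := prod_pos fun k _ => pow_pos (hb k) _
  have hlog_upper :
      Real.log (contK a m) ≤ ∑ k ∈ range (n + 1), (lam k : ℝ) * Real.log (b k + 1) := by
    have h := Real.log_natCast_prod_pow (range (n + 1)) (fun k => b k + 1) lam
      fun k _ => Nat.succ_ne_zero _
    push_cast at h
    rw [← h]
    exact Real.log_le_log (by exact_mod_cast hpos.trans_le hlower) (by exact_mod_cast hupper)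
  have hnonneg : 0 ≤ ∑ k ∈ range (n + 1), (lam k : ℝ) * Real.log (b k + 1) :=
    sum_nonneg fun k _ => mul_nonneg (Nat.cast_nonneg _) (Real.log_nonneg (by simp))
  refine ⟨?_, by linarith⟩
  rw [← Real.log_natCast_prod_pow _ _ _ fun k _ => (hb k).ne']
  exact Real.log_le_log (by exact_mod_cast hpos) (by exact_mod_cast hlower)

/-- For positive integers `b 0, …, b n` and `lam 0, …, lam n`, with
`m(n) = lam 0 + ⋯ + lam n`, the continuant of the word consisting of `b 0` repeated
`lam 0` times, …, `b n` repeated `lam n` times satisfies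
`∑_{k=0}^n lam k * log (b k) ≤ log K_{m(n)} ≤ 2 * ∑_{k=0}^n lam k * log (b k + 1)`. -/
theorem continuant_block_log_bounds (n : ℕ) (b lam : ℕ → ℕ)
    (hb : ∀ k, 0 < b k) (hlam : ∀ k, 0 < lam k) (a : ℕ → ℕ)
    (hblock : ∀ j i, (∑ k ∈ Finset.range j, lam k) < i →
      i ≤ ∑ k ∈ Finset.range (j + 1), lam k → a i = b j) :
    (∑ k ∈ Finset.range (n + 1), (lam k : ℝ) * Real.log (b k)) ≤
        Real.log (contK a (∑ k ∈ Finset.range (n + 1), lam k)) ∧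
      Real.log (contK a (∑ k ∈ Finset.range (n + 1), lam k)) ≤
        2 * ∑ k ∈ Finset.range (n + 1), (lam k : ℝ) * Real.log (b k + 1) :=
  continuant_block_log_bounds_general n b lam hb a hblock
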